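/- arXiv:2406.15929 — 3 statements merged into one kernel-verified Lean document; each statement's English description precedes it below -/
import Mathlib

section
/- Let μ ∈ (ℂ∖ℤ)^n and let λ ∈ (1/2+ℤ)^n be a dominant so(2n)-weight. For every γ ∈ {ω(T(W)) : T(W) ∈ B(μ,λ)}, the set {T(W) ∈ B(μ,λ) : ω(T(W)) = γ} is finite and 2^{n−1} · #{T(W) ∈ B(μ,λ) : ω(T(W)) = γ} = #D_st^λ. -/
open scoped BigOperators Classical

noncomputable section

namespace GTpaper

/-- `a - b ∈ ℤ≥0`, the integer-shift order `a ≥ b` on `ℂ`. -/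
def IntGE (a b : ℂ) : Prop := ∃ m : ℕ, a = b + m

/-- `a - b ∈ ℤ>0`, the strict integer-shift order `a > b` on `ℂ`. -/
def IntGT (a b : ℂ) : Prop := ∃ m : ℕ, a = b + m + 1

/-- `a ∈ ℤ` as a subset of `ℂ`. -/
def IsInt (a : ℂ) : Prop := ∃ m : ℤ, a = m

/-- `a ∈ 1/2 + ℤ` as a subset of `ℂ`. -/
def IsHalfInt (a : ℂ) : Prop := ∃ m : ℤ, a = (m : ℂ) + 1 / 2

/-- A tableau: a doubly indexed family of unprimed entries `u k i` (`ℓ_{ki}`) and primed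
entries `p k i` (`ℓ'_{ki}`).  Only positions with `1 ≤ i ≤ k ≤ n` (resp. `2 ≤ i` for the primed
entries of type-`D` tableaux) are relevant; normalization predicates below set the rest to `0`. -/
structure Tab (R : Type*) where
  u : ℕ → ℕ → R
  p : ℕ → ℕ → R

instance : Add (Tab ℤ) :=
  ⟨fun a b => ⟨fun k i => a.u k i + b.u k i, fun k i => a.p k i + b.p k i⟩⟩

instance : Neg (Tab ℤ) := ⟨fun a => ⟨fun k i => -a.u k i, fun k i => -a.p k i⟩⟩

/-- Add an integer tableau `Z` to a tableau `L`. -/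
def Tab.addZ {R : Type*} [Ring R] (L : Tab R) (Z : Tab ℤ) : Tab R :=
  ⟨fun k i => L.u k i + (Z.u k i : R), fun k i => L.p k i + (Z.p k i : R)⟩

/-- `δ^{(k i)}`: the integer tableau with a single `1` at unprimed position `(k,i)`. -/
def deltaU (k i : ℕ) : Tab ℤ :=
  ⟨fun a b => if a = k ∧ b = i then 1 else 0, fun _ _ => 0⟩

/-- `δ^{(k i)'}`: the integer tableau with a single `1` at primed position `(k,i)`. -/
def deltaP (k i : ℕ) : Tab ℤ :=
  ⟨fun _ _ => 0, fun a b => if a = k ∧ b = i then 1 else 0⟩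

section Coeffs

variable {F : Type*} [Field F]

/-- `ω_k(L)`, the `k`-th component of the `C`-weight of a type-`C` tableau. -/
def wt (k : ℕ) (L : Tab F) : F :=
  2 * (∑ i ∈ Finset.Icc 1 k, L.p k i) - (∑ i ∈ Finset.Icc 1 k, L.u k i) -
    (∑ i ∈ Finset.Icc 1 (k - 1), L.u (k - 1) i) + (k : F) - 1 / 2

/-- `A_{ki}(L)`. -/
def coA (k i : ℕ) (L : Tab F) : F :=
  ∏ a ∈ (Finset.Icc 1 k).erase i, (L.p k a - L.p k i)⁻¹

/-- `B_{ki}(L)`. -/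
def coB (k i : ℕ) (L : Tab F) : F :=
  2 * coA k i L * (2 * L.p k i - 1) * (∏ a ∈ Finset.Icc 1 k, (L.u k a - L.p k i)) *
    ∏ a ∈ Finset.Icc 1 (k - 1), (L.u (k - 1) a - L.p k i)

/-- `C_{ki}(L)`. -/
def coC (k i : ℕ) (L : Tab F) : F :=
  (2 * L.u (k - 1) i - 1)⁻¹ *
    ∏ a ∈ (Finset.Icc 1 (k - 1)).erase i,
      ((L.u (k - 1) i - L.u (k - 1) a) * (L.u (k - 1) i + L.u (k - 1) a - 1))⁻¹

/-- `D_{kijm}(L)`. -/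
def coD (k i j m : ℕ) (L : Tab F) : F :=
  coA k i L * coA (k - 1) m L * coC k j L *
    (∏ a ∈ (Finset.Icc 1 k).erase i, (L.u (k - 1) j ^ 2 - L.p k a ^ 2)) *
    ∏ a ∈ (Finset.Icc 1 (k - 1)).erase m, (L.u (k - 1) j ^ 2 - L.p (k - 1) a ^ 2)

end Coeffs

/-- The `C`-weight `ω(T(L)) ∈ ℂ^n` of a type-`C` tableau. -/
def cwtv (n : ℕ) (T : Tab ℂ) : Fin n → ℂ := fun k => wt ((k : ℕ) + 1) T

/-- A type-`C` tableau is `C`-standard (conditions (7) and (8)). -/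
def IsCStandard (n : ℕ) (T : Tab ℂ) : Prop :=
  ∀ k, 1 ≤ k → k ≤ n →
    (IntGE (-(1 / 2)) (T.p k 1) ∧
      (∀ i, 1 ≤ i → i ≤ k → IntGE (T.p k i) (T.u k i)) ∧
      (∀ i, 1 ≤ i → i + 1 ≤ k → IntGT (T.u k i) (T.p k (i + 1))) ∧
      (2 ≤ k →
        (∀ i, 1 ≤ i → i ≤ k - 1 → IntGE (T.p k i) (T.u (k - 1) i)) ∧
        (∀ i, 1 ≤ i → i ≤ k - 1 → IntGT (T.u (k - 1) i) (T.p k (i + 1)))))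

/-- A type-`D` tableau is `D`-standard (conditions (5) and (6)); primed entries `p k 1`
are irrelevant. -/
def IsDStandard (n : ℕ) (T : Tab ℂ) : Prop :=
  ∀ k, 2 ≤ k → k ≤ n →
    (IntGE (-T.p k 2) (T.u k 1) ∧
      (∀ i, 2 ≤ i → i ≤ k → IntGE (T.p k i) (T.u k i)) ∧
      (∀ i, 1 ≤ i → i + 1 ≤ k → IntGT (T.u k i) (T.p k (i + 1))) ∧
      IntGE (-T.p k 2) (T.u (k - 1) 1) ∧
      (∀ i, 2 ≤ i → i ≤ k - 1 → IntGE (T.p k i) (T.u (k - 1) i)) ∧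
      (∀ i, 1 ≤ i → i ≤ k - 1 → IntGT (T.u (k - 1) i) (T.p k (i + 1))))

/-- `C`-regularity of a type-`C` tableau. -/
def IsCRegular (n : ℕ) (T : Tab ℂ) : Prop :=
  (∀ k i a, 1 ≤ i → i ≤ k → 1 ≤ a → a ≤ k → k ≤ n → i ≠ a → T.p k a ≠ T.p k i) ∧
  (∀ k i a, 1 ≤ i → i ≤ k → 1 ≤ a → a ≤ k → k ≤ n - 1 → i ≠ a → T.u k a ≠ T.u k i) ∧
  (∀ k i a, 1 ≤ i → i ≤ k → 1 ≤ a → a ≤ k → k ≤ n - 1 → i ≠ a → T.u k a + T.u k i ≠ 1) ∧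
  (∀ k i, 1 ≤ i → i ≤ k → k ≤ n - 1 → T.u k i ≠ 1 / 2)

/-- `C`-genericity of a type-`C` tableau. -/
def IsCGeneric (n : ℕ) (T : Tab ℂ) : Prop :=
  (∀ k i a, 1 ≤ i → i ≤ k → 1 ≤ a → a ≤ k → k ≤ n → i ≠ a → ¬IsInt (T.p k a - T.p k i)) ∧
  (∀ k i a, 1 ≤ i → i ≤ k → 1 ≤ a → a ≤ k → k ≤ n - 1 → i ≠ a → ¬IsInt (T.u k a - T.u k i)) ∧
  (∀ k i a, 1 ≤ i → i ≤ k → 1 ≤ a → a ≤ k → k ≤ n - 1 → ¬IsInt (T.u k a + T.u k i)) ∧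
  (∀ k i, 1 ≤ i → i ≤ k → k ≤ n - 1 → ¬IsHalfInt (T.u k i))

/-- Normalization of a type-`C` tableau: all entries outside `1 ≤ i ≤ k ≤ n` vanish. -/
def CNorm (n : ℕ) (T : Tab ℂ) : Prop :=
  (∀ k i, ¬(1 ≤ i ∧ i ≤ k ∧ k ≤ n) → T.u k i = 0) ∧
  (∀ k i, ¬(1 ≤ i ∧ i ≤ k ∧ k ≤ n) → T.p k i = 0)

/-- Normalization of a type-`D` tableau: unprimed entries outside `1 ≤ i ≤ k ≤ n` and primed
entries outside `2 ≤ i ≤ k ≤ n` vanish. -/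
def DNorm (n : ℕ) (T : Tab ℂ) : Prop :=
  (∀ k i, ¬(1 ≤ i ∧ i ≤ k ∧ k ≤ n) → T.u k i = 0) ∧
  (∀ k i, ¬(2 ≤ i ∧ i ≤ k ∧ k ≤ n) → T.p k i = 0)

/-- A dominant `so(2n)`-weight. -/
def SODominant {n : ℕ} (lam : Fin n → ℂ) : Prop :=
  (∀ i j : Fin n, (i : ℕ) + 1 = (j : ℕ) → IntGE (lam i) (lam j)) ∧
  (∀ i j : Fin n, (i : ℕ) = 0 → (j : ℕ) = 1 → IntGE (-(lam i + lam j)) 0)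

/-- `D_st^λ`: the set of (normalized) `D`-standard tableaux with top row
`ℓ_i = λ_i - i + 3/2` (`1`-based `i`). -/
def DSt (n : ℕ) (lam : Fin n → ℂ) : Set (Tab ℂ) :=
  {T | DNorm n T ∧ IsDStandard n T ∧
    ∀ i : Fin n, T.u n ((i : ℕ) + 1) = lam i - ((i : ℕ) + 1) + 3 / 2}

/-- The type-`D` tableau obtained from a type-`C` tableau by deleting the entries
`ℓ'_{11}, …, ℓ'_{n1}`. -/
def CtoD (W : Tab ℂ) : Tab ℂ := ⟨W.u, fun k i => if i = 1 then 0 else W.p k i⟩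

/-- `𝔅(μ,λ)`: type-`C` tableaux whose left-most primed column is in `μ + ℤ^n` and whose
remaining part is a `D`-standard tableau with top row `λ + ρ_D + 1/2`. -/
def TabB (n : ℕ) (mu lam : Fin n → ℂ) : Set (Tab ℂ) :=
  {W | CNorm n W ∧ (∀ k : Fin n, IsInt (W.p ((k : ℕ) + 1) 1 - mu k)) ∧ CtoD W ∈ DSt n lam}

/-- Membership of a vector of `ℂ^n` in the root lattice `Q_C = {a ∈ ℤ^n | ∑ a_i ∈ 2ℤ}`. -/
def QCvec {n : ℕ} (v : Fin n → ℂ) : Prop :=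
  ∃ q : Fin n → ℤ, (2 ∣ ∑ i, q i) ∧ ∀ i, v i = (q i : ℂ)

/-! ### The symplectic Lie algebra `sp(2n, ℂ)` -/

/-- Index set `{1,…,n} × {±}` for rows/columns of `2n × 2n` matrices: `(k, true)` is the
positive index `k`, `(k, false)` is the negative index `-k`. -/
abbrev SpIdx (n : ℕ) := Fin n × Bool

/-- The sign of an index. -/
def sgnC {n : ℕ} (a : SpIdx n) : ℂ := if a.2 then 1 else -1

/-- `a ↦ -a` on indices. -/
def negIdx {n : ℕ} (a : SpIdx n) : SpIdx n := (a.1, !a.2)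

attribute [local instance] LieRing.ofAssociativeRing
attribute [local instance] LieAlgebra.ofAssociativeAlgebra

/-- `F_{ab} = E_{ab} - sgn(a)sgn(b) E_{-b,-a}`. -/
def Fmat (n : ℕ) (a b : SpIdx n) : Matrix (SpIdx n) (SpIdx n) ℂ :=
  Matrix.single a b 1 - Matrix.single (negIdx b) (negIdx a) (sgnC a * sgnC b)

/-- `sp(2n, ℂ)`: the Lie subalgebra of `gl(2n, ℂ)` spanned by the `F_{ab}`. -/
def sp (n : ℕ) : LieSubalgebra ℂ (Matrix (SpIdx n) (SpIdx n) ℂ) :=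
  LieSubalgebra.lieSpan ℂ _ (Set.range fun x : SpIdx n × SpIdx n => Fmat n x.1 x.2)

/-- `F_{ab}` as an element of `sp(2n, ℂ)`. -/
def spF (n : ℕ) (a b : SpIdx n) : sp n :=
  ⟨Fmat n a b, LieSubalgebra.subset_lieSpan ⟨(a, b), rfl⟩⟩

/-- The basis vector of the free module on a set `S` of tableaux attached to `L`, with the
convention that `T(L) = 0` whenever `L ∉ S`. -/
def bvec {F : Type*} [Field F] (S : Set (Tab F)) (L : Tab F) : ↥S →₀ F :=
  if h : L ∈ S then Finsupp.single ⟨L, h⟩ 1 else 0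

/-- The statement that a Lie algebra homomorphism `ρ : sp(2n,ℂ) → End(V)` acts on the basis `S`
of tableaux by the Gelfand--Tsetlin formulas (with 1-based row index `k+1` for `k : Fin n`). -/
def GTact (n : ℕ) {F : Type*} [Field F] [Algebra ℂ F] (S : Set (Tab F))
    (ρ : sp n →ₗ⁅ℂ⁆ Module.End ℂ (↥S →₀ F)) : Prop :=
  ∀ L ∈ S,
    (∀ k : Fin n,
      ρ (spF n (k, true) (k, true)) (bvec S L) = wt ((k : ℕ) + 1) L • bvec S L ∧
      ρ (spF n (k, true) (k, false)) (bvec S L) =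
        ∑ i ∈ Finset.Icc 1 ((k : ℕ) + 1),
          coA ((k : ℕ) + 1) i L • bvec S (L.addZ (deltaP ((k : ℕ) + 1) i)) ∧
      ρ (spF n (k, false) (k, true)) (bvec S L) =
        ∑ i ∈ Finset.Icc 1 ((k : ℕ) + 1),
          coB ((k : ℕ) + 1) i L • bvec S (L.addZ (-deltaP ((k : ℕ) + 1) i))) ∧
    (∀ k : Fin n, 1 ≤ (k : ℕ) →
      ρ (spF n (⟨(k : ℕ) - 1, lt_of_le_of_lt (Nat.sub_le _ _) k.isLt⟩, true) (k, false))
          (bvec S L) =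
        (∑ i ∈ Finset.Icc 1 (k : ℕ),
          coC ((k : ℕ) + 1) i L • bvec S (L.addZ (-deltaU (k : ℕ) i))) +
        ∑ i ∈ Finset.Icc 1 ((k : ℕ) + 1), ∑ j ∈ Finset.Icc 1 (k : ℕ), ∑ m ∈ Finset.Icc 1 (k : ℕ),
          coD ((k : ℕ) + 1) i j m L •
            bvec S (L.addZ (deltaP ((k : ℕ) + 1) i + deltaU (k : ℕ) j + deltaP (k : ℕ) m)))

/-- The set of tableaux `{T(L + Z)}` with `Z` an integer tableau vanishing on the unprimed
top row. -/
def orbitB {F : Type*} [Field F] (n : ℕ) (L : Tab F) : Set (Tab F) :=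
  {M | ∃ Z : Tab ℤ, (∀ i, Z.u n i = 0) ∧ M = L.addZ Z}

/-- The tableau `T(W^{μ,λ})`. -/
def Wup (n : ℕ) (mu lam : Fin n → ℂ) : Tab ℂ :=
  ⟨fun k i => if h : 1 ≤ i ∧ i ≤ k ∧ k ≤ n then lam ⟨i - 1, by omega⟩ - (i : ℂ) + 3 / 2 else 0,
   fun k i => if h : 1 ≤ i ∧ i ≤ k ∧ k ≤ n then
      (if i = 1 then mu ⟨k - 1, by omega⟩ else lam ⟨i - 1, by omega⟩ - (i : ℂ) + 3 / 2) else 0⟩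

/-- The tableau `T(W_{μ,λ})`. -/
def Wlow (n : ℕ) (mu lam : Fin n → ℂ) : Tab ℂ :=
  ⟨fun k i => if h : 1 ≤ i ∧ i ≤ k ∧ k ≤ n then
      (if i = 1 then
        (if (n - k) % 2 = 0 then lam ⟨0, by omega⟩ + 1 / 2 else 1 - (lam ⟨0, by omega⟩ + 1 / 2))
       else lam ⟨i - 1, by omega⟩ - (i : ℂ) + 3 / 2) else 0,
   fun k i => if h : 1 ≤ i ∧ i ≤ k ∧ k ≤ n then
      (if i = 1 then mu ⟨k - 1, by omega⟩ else lam ⟨i - 1, by omega⟩ - (i : ℂ) + 3 / 2) else 0⟩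

/-- `𝔅_k^+(μ,λ)` for a `1`-based row index `k`. -/
def BkPlus (n : ℕ) (mu lam : Fin n → ℂ) (k : ℕ) : Set (Tab ℂ) :=
  {W | W ∈ TabB n mu lam ∧ IntGE (W.p k 1) (1 / 2)}

end GTpaper

/-!
Since `λ` is half-integral, the entries of a tableau in `D_st^λ` are integers lying between
entries of its top row, so `D_st^λ` is finite. A tableau `W ∈ 𝔅(μ,λ)` is its `D`-part `T`
together with the column `ℓ'_{k1}`, and `ω_k(W) = 2ℓ'_{k1} + ω_k(T)`. As `ℓ'_{k1} ∈ μ_k + ℤ`, the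
weight fibre of `W₀` is in bijection with the parity class `{T ∈ D_st^λ | ω(T) ≡ ω(T₀) mod 2}`
of the `D`-part `T₀` of `W₀`. Replacing `ℓ_{k1}` by `1 - ℓ_{k1}` for `1 ≤ k < n` preserves `D`-standardness and
changes `ω_k` and `ω_{k+1}` by the odd integer `1 - 2ℓ_{k1}`. Since the parity of `∑_k ω_k(T)` only
depends on the common top row, every tableau of `D_st^λ` is reached from the parity class of `T₀`
by exactly one of these `2^{n-1}` sets of flips.
-/

namespace GTpaper

open Finset

attribute [ext] Tab

section IntegerEntries

lemma IntGT.intGE {a b : ℂ} (h : IntGT a b) : IntGE a b := by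
  obtain ⟨m, rfl⟩ := h
  exact ⟨m + 1, by push_cast; ring⟩

def intBox (M : ℤ) : Set ℂ := (Int.cast : ℤ → ℂ) '' Set.Icc (-M) M

lemma intBox_finite (M : ℤ) : (intBox M).Finite := (Set.finite_Icc _ _).image _

lemma IsInt.of_mem_intBox {M : ℤ} {x : ℂ} (hx : x ∈ intBox M) : IsInt x := by
  obtain ⟨z, -, rfl⟩ := hx
  exact ⟨z, rfl⟩

lemma zero_mem_intBox {M : ℤ} (hM : 0 ≤ M) : (0 : ℂ) ∈ intBox M :=
  ⟨0, ⟨by omega, hM⟩, Int.cast_zero⟩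

lemma neg_mem_intBox {M : ℤ} {x : ℂ} (hx : x ∈ intBox M) : -x ∈ intBox M := by
  obtain ⟨z, ⟨h1, h2⟩, rfl⟩ := hx
  exact ⟨-z, ⟨by omega, by omega⟩, Int.cast_neg z⟩

lemma mem_intBox_of_intGE {M : ℤ} {a x b : ℂ} (ha : a ∈ intBox M) (hb : b ∈ intBox M)
    (hax : IntGE a x) (hxb : IntGE x b) : x ∈ intBox M := by
  obtain ⟨za, ⟨-, ha2⟩, rfl⟩ := ha
  obtain ⟨zb, ⟨hb1, -⟩, rfl⟩ := hb
  obtain ⟨m, rfl⟩ := hxb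
  obtain ⟨m', hm'⟩ := hax
  have : za = zb + m + m' := by exact_mod_cast hm'
  exact ⟨zb + m, ⟨by omega, by omega⟩, by push_cast; ring⟩

lemma DSt_u_top {n : ℕ} {lam : Fin n → ℂ} {T : Tab ℂ} (hT : T ∈ DSt n lam) {i : ℕ}
    (hi : 1 ≤ i) (hin : i ≤ n) : T.u n i = lam ⟨i - 1, by omega⟩ - i + 3 / 2 := by
  have h := hT.2.2 ⟨i - 1, by omega⟩
  simp only [Nat.sub_add_cancel hi] at h
  rw [h, Nat.cast_sub hi]
  push_cast
  ring

lemma DSt_u_top_eq {n : ℕ} {lam : Fin n → ℂ} {T T' : Tab ℂ} (hT : T ∈ DSt n lam)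
    (hT' : T' ∈ DSt n lam) {i : ℕ} (hi : 1 ≤ i) (hin : i ≤ n) : T.u n i = T'.u n i := by
  rw [DSt_u_top hT hi hin, DSt_u_top hT' hi hin]

lemma exists_intBox_DSt_u_top {n : ℕ} {lam : Fin n → ℂ} (hlam : ∀ i, IsHalfInt (lam i)) :
    ∃ M, 0 ≤ M ∧ ∀ T ∈ DSt n lam, ∀ i, 1 ≤ i → i ≤ n → T.u n i ∈ intBox M := by
  choose m hm using hlam
  refine ⟨∑ j, |m j - j + 1|, sum_nonneg fun _ _ => abs_nonneg _, fun T hT i hi hin => ?_⟩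
  have hle := single_le_sum (fun j _ => abs_nonneg (m j - j + 1)) (mem_univ ⟨i - 1, by omega⟩)
  refine ⟨m ⟨i - 1, by omega⟩ - (i - 1 : ℕ) + 1, abs_le.1 hle, ?_⟩
  rw [DSt_u_top hT hi hin, hm, Nat.cast_sub hi]
  push_cast
  ring

lemma IsDStandard.mem_intBox_of_row {n k : ℕ} {T : Tab ℂ} {M : ℤ} (hT : IsDStandard n T)
    (hk : 2 ≤ k) (hkn : k ≤ n) (hrow : ∀ i, 1 ≤ i → i ≤ k → T.u k i ∈ intBox M) :
    (∀ i, 2 ≤ i → i ≤ k → T.p k i ∈ intBox M) ∧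
      ∀ i, 1 ≤ i → i ≤ k - 1 → T.u (k - 1) i ∈ intBox M := by
  obtain ⟨-, hpu, hup, hfirst, hpu', hup'⟩ := hT k hk hkn
  have hp : ∀ i, 2 ≤ i → i ≤ k → T.p k i ∈ intBox M := by
    intro i hi hik
    have h := hup (i - 1) (by omega) (by omega)
    rw [Nat.sub_add_cancel (by omega)] at h
    exact mem_intBox_of_intGE (hrow _ (by omega) (by omega)) (hrow i (by omega) hik)
      h.intGE (hpu i hi hik)
  refine ⟨hp, fun i hi hik => ?_⟩
  rcases hi.eq_or_lt with rfl | hi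
  · have hp2 := hp 2 le_rfl hk
    exact mem_intBox_of_intGE (neg_mem_intBox hp2) hp2 hfirst (hup' 1 le_rfl hik).intGE
  · exact mem_intBox_of_intGE (hp i hi (by omega)) (hp (i + 1) (by omega) (by omega))
      (hpu' i hi hik) (hup' i (by omega) hik).intGE

lemma DSt_mem_intBox {n : ℕ} {lam : Fin n → ℂ} {T : Tab ℂ} (hT : T ∈ DSt n lam) {M : ℤ}
    (hM : 0 ≤ M) (htop : ∀ i, 1 ≤ i → i ≤ n → T.u n i ∈ intBox M) (k i : ℕ) :
    T.u k i ∈ intBox M ∧ T.p k i ∈ intBox M := by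
  obtain ⟨⟨hu0, hp0⟩, hstd, -⟩ := hT
  have hrow : ∀ d k, k + d = n → ∀ i, 1 ≤ i → i ≤ k → T.u k i ∈ intBox M := by
    intro d
    induction d with
    | zero => intro k hk; simpa [← hk] using htop
    | succ d ih =>
      intro k hk i hi hik
      have h := (hstd.mem_intBox_of_row (k := k + 1) (by omega) (by omega)
        (ih (k + 1) (by omega))).2 i hi
      simpa using h hik
  constructor
  · by_cases h : 1 ≤ i ∧ i ≤ k ∧ k ≤ n
    · exact hrow (n - k) k (by omega) i h.1 h.2.1
    · rw [hu0 k i h]; exact zero_mem_intBox hM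
  · by_cases h : 2 ≤ i ∧ i ≤ k ∧ k ≤ n
    · exact (hstd.mem_intBox_of_row (by omega) h.2.2
        (hrow (n - k) k (by omega))).1 i h.1 h.2.1
    · rw [hp0 k i h]; exact zero_mem_intBox hM

lemma exists_intBox_DSt {n : ℕ} {lam : Fin n → ℂ} (hlam : ∀ i, IsHalfInt (lam i)) :
    ∃ M, ∀ T ∈ DSt n lam, ∀ k i, T.u k i ∈ intBox M ∧ T.p k i ∈ intBox M := by
  obtain ⟨M, hM, htop⟩ := exists_intBox_DSt_u_top hlam
  exact ⟨M, fun T hT => DSt_mem_intBox hT hM (htop T hT)⟩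

lemma DSt_finite {n : ℕ} {lam : Fin n → ℂ} (hlam : ∀ i, IsHalfInt (lam i)) :
    (DSt n lam).Finite := by
  obtain ⟨M, hM⟩ := exists_intBox_DSt hlam
  let entries : Tab ℂ → Fin (n + 1) → Fin (n + 1) → ℂ × ℂ := fun T k i => (T.u k i, T.p k i)
  refine Set.Finite.of_finite_image (f := entries) ?_ ?_
  · refine (Set.Finite.pi fun _ => Set.Finite.pi fun _ =>
      (intBox_finite M).prod (intBox_finite M)).subset ?_
    rintro _ ⟨T, hT, rfl⟩ k - i -
    exact hM T hT k i
  · intro T hT T' hT' h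
    have hentries (k i : ℕ) (hki : k ≤ n ∧ i ≤ n) :=
      Prod.ext_iff.1 (congrFun (congrFun h ⟨k, by omega⟩) ⟨i, by omega⟩)
    ext k i
    · by_cases hki : k ≤ n ∧ i ≤ n
      · exact (hentries k i hki).1
      · rw [hT.1.1 k i (by omega), hT'.1.1 k i (by omega)]
    · by_cases hki : k ≤ n ∧ i ≤ n
      · exact (hentries k i hki).2
      · rw [hT.1.2 k i (by omega), hT'.1.2 k i (by omega)]

def IsIntTab (T : Tab ℂ) : Prop := ∀ k i, IsInt (T.u k i) ∧ IsInt (T.p k i)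

lemma DSt_isIntTab {n : ℕ} {lam : Fin n → ℂ} (hlam : ∀ i, IsHalfInt (lam i)) {T : Tab ℂ}
    (hT : T ∈ DSt n lam) : IsIntTab T := by
  obtain ⟨M, hM⟩ := exists_intBox_DSt hlam
  exact fun k i => ⟨.of_mem_intBox (hM T hT k i).1, .of_mem_intBox (hM T hT k i).2⟩

end IntegerEntries

section IntegerWeight

lemma sum_Icc_add_pred {M : Type*} [AddCommMonoid M] (f : ℕ → M) (h0 : f 0 = 0) (N : ℕ) :
    ∑ k ∈ Icc 1 N, (f k + f (k - 1)) = f N + 2 • ∑ k ∈ Icc 1 (N - 1), f k := by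
  induction N with
  | zero => simp [h0]
  | succ N ih =>
    rw [sum_Icc_succ_top (by omega), ih]
    rcases N with _ | N
    · simp [h0]
    · rw [show N + 1 + 1 - 1 = N + 1 by omega, sum_Icc_succ_top (by omega)]
      simp only [Nat.add_sub_cancel, smul_add, two_nsmul]
      abel

/-- Meaningful only when `x ∈ ℤ`. -/
def intPart (x : ℂ) : ℤ := ⌊x.re⌋

lemma IsInt.intCast_intPart {x : ℂ} (hx : IsInt x) : (intPart x : ℂ) = x := by
  obtain ⟨m, rfl⟩ := hx
  simp [intPart]

lemma IsInt.intPart_one_sub {x : ℂ} (hx : IsInt x) : intPart (1 - x) = 1 - intPart x := by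
  obtain ⟨m, rfl⟩ := hx
  rw [show (1 - m : ℂ) = ((1 - m : ℤ) : ℂ) by push_cast; ring]
  simp only [intPart, Complex.intCast_re, Int.floor_intCast]

def rowSum (T : Tab ℂ) (k : ℕ) : ℤ := ∑ i ∈ Icc 1 k, intPart (T.u k i)

def zwt (k : ℕ) (T : Tab ℂ) : ℤ :=
  2 * ∑ i ∈ Icc 1 k, intPart (T.p k i) - rowSum T k - rowSum T (k - 1)

lemma wt_eq_zwt {T : Tab ℂ} (hT : IsIntTab T) (k : ℕ) : wt k T = zwt k T + k - 1 / 2 := by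
  simp only [wt, zwt, rowSum]
  push_cast
  simp only [(hT _ _).1.intCast_intPart, (hT _ _).2.intCast_intPart]

lemma DSt_rowSum_top_eq {n : ℕ} {lam : Fin n → ℂ} {T T' : Tab ℂ} (hT : T ∈ DSt n lam)
    (hT' : T' ∈ DSt n lam) : rowSum T n = rowSum T' n :=
  sum_congr rfl fun i hi => by
    rw [DSt_u_top_eq hT hT' (mem_Icc.1 hi).1 (mem_Icc.1 hi).2]

def relWtSum (T₀ T : Tab ℂ) (j : ℕ) : ℤ := ∑ k ∈ Icc 1 j, (zwt k T - zwt k T₀)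

lemma relWtSum_of_one_le (T₀ T : Tab ℂ) {j : ℕ} (hj : 1 ≤ j) :
    relWtSum T₀ T j = relWtSum T₀ T (j - 1) + (zwt j T - zwt j T₀) := by
  obtain ⟨j, rfl⟩ := Nat.exists_eq_add_of_le' hj
  exact sum_Icc_succ_top (by omega) _

lemma sum_zwt_eq (T : Tab ℂ) (N : ℕ) :
    ∑ k ∈ Icc 1 N, zwt k T = 2 * ∑ k ∈ Icc 1 N, ∑ i ∈ Icc 1 k, intPart (T.p k i) -
      (rowSum T N + 2 * ∑ k ∈ Icc 1 (N - 1), rowSum T k) := by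
  have h := sum_Icc_add_pred (rowSum T) (by simp [rowSum]) N
  simp only [nsmul_eq_mul, Nat.cast_ofNat] at h
  rw [← h, mul_sum, ← sum_sub_distrib]
  exact sum_congr rfl fun k _ => by rw [zwt]; ring

/-- Since all tableaux of `D_st^λ` share the top row, their weights have the same total
parity. -/
lemma DSt_two_dvd_relWtSum {n : ℕ} {lam : Fin n → ℂ} {T₀ T : Tab ℂ} (hT₀ : T₀ ∈ DSt n lam)
    (hT : T ∈ DSt n lam) : 2 ∣ relWtSum T₀ T n := by
  rw [relWtSum, sum_sub_distrib, sum_zwt_eq, sum_zwt_eq, DSt_rowSum_top_eq hT hT₀]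
  omega

end IntegerWeight

section Flips

def flipFirst (s : Finset ℕ) (T : Tab ℂ) : Tab ℂ :=
  ⟨fun k i => if i = 1 ∧ k ∈ s then 1 - T.u k i else T.u k i, T.p⟩

lemma flipFirst_u_one (s : Finset ℕ) (T : Tab ℂ) (k : ℕ) :
    (flipFirst s T).u k 1 = if k ∈ s then 1 - T.u k 1 else T.u k 1 := by
  simp [flipFirst]

lemma flipFirst_u_of_ne_one (s : Finset ℕ) (T : Tab ℂ) (k : ℕ) {i : ℕ} (hi : i ≠ 1) :
    (flipFirst s T).u k i = T.u k i := by
  simp [flipFirst, hi]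

@[simp]
lemma flipFirst_p (s : Finset ℕ) (T : Tab ℂ) : (flipFirst s T).p = T.p := rfl

lemma flipFirst_flipFirst (s : Finset ℕ) (T : Tab ℂ) : flipFirst s (flipFirst s T) = T := by
  ext k i
  · simp only [flipFirst]
    split_ifs <;> ring
  · rfl

lemma intGE_neg_one_sub {p u : ℂ} (h1 : IntGE (-p) u) (h2 : IntGT u p) :
    IntGE (-p) (1 - u) ∧ IntGT (1 - u) p := by
  obtain ⟨m, hm⟩ := h1
  obtain ⟨m', hm'⟩ := h2
  exact ⟨⟨m', by linear_combination hm'⟩, ⟨m, by linear_combination hm⟩⟩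

/-- The only conditions of `D`-standardness involving `ℓ_{k1}` have the shape
`-p ≥ ℓ_{k1} > p`, which is invariant under `ℓ_{k1} ↦ 1 - ℓ_{k1}`. -/
lemma flipFirst_sandwich (s : Finset ℕ) {T : Tab ℂ} {p : ℂ} {k : ℕ} (h1 : IntGE (-p) (T.u k 1))
    (h2 : IntGT (T.u k 1) p) :
    IntGE (-p) ((flipFirst s T).u k 1) ∧ IntGT ((flipFirst s T).u k 1) p := by
  rw [flipFirst_u_one]
  split_ifs
  exacts [intGE_neg_one_sub h1 h2, ⟨h1, h2⟩]

lemma IsDStandard.flipFirst {n : ℕ} {T : Tab ℂ} (hT : IsDStandard n T) (s : Finset ℕ) :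
    IsDStandard n (flipFirst s T) := by
  intro k hk hkn
  obtain ⟨c1, c2, c3, c4, c5, c6⟩ := hT k hk hkn
  have hup := flipFirst_sandwich s c1 (c3 1 le_rfl hk)
  have hlow := flipFirst_sandwich s c4 (c6 1 le_rfl (by omega))
  refine ⟨hup.1, fun i hi hik => ?_, fun i hi hik => ?_, hlow.1, fun i hi hik => ?_,
    fun i hi hik => ?_⟩
  · rw [flipFirst_u_of_ne_one s T k (by omega)]; exact c2 i hi hik
  · rcases hi.eq_or_lt with rfl | hi
    · exact hup.2
    · rw [flipFirst_u_of_ne_one s T k (by omega)]; exact c3 i hi.le hik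
  · rw [flipFirst_u_of_ne_one s T _ (by omega)]; exact c5 i hi hik
  · rcases hi.eq_or_lt with rfl | hi
    · exact hlow.2
    · rw [flipFirst_u_of_ne_one s T _ (by omega)]; exact c6 i hi.le hik

lemma flipFirst_mem_DSt {n : ℕ} {lam : Fin n → ℂ} {s : Finset ℕ} (hs : s ⊆ Ico 1 n)
    {T : Tab ℂ} (hT : T ∈ DSt n lam) : flipFirst s T ∈ DSt n lam := by
  obtain ⟨⟨hu0, hp0⟩, hstd, htop⟩ := hT
  refine ⟨⟨fun k i hki => ?_, hp0⟩, hstd.flipFirst s, fun i => ?_⟩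
  · have : ¬(i = 1 ∧ k ∈ s) := fun ⟨hi, hk⟩ => hki ⟨hi.ge, by have := mem_Ico.1 (hs hk); omega⟩
    simp only [GTpaper.flipFirst, if_neg this]
    exact hu0 k i hki
  · have : n ∉ s := fun hn => by simpa using hs hn
    simp only [GTpaper.flipFirst, this, and_false, if_false]
    exact htop i

def flipShift (s : Finset ℕ) (T : Tab ℂ) (k : ℕ) : ℤ :=
  if k ∈ s then 1 - 2 * intPart (T.u k 1) else 0

lemma flipShift_emod_two (s : Finset ℕ) (T : Tab ℂ) (k : ℕ) :
    flipShift s T k % 2 = if k ∈ s then 1 else 0 := by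
  unfold flipShift
  split_ifs <;> omega

lemma rowSum_flipFirst {s : Finset ℕ} (hs : 0 ∉ s) {T : Tab ℂ} (hT : IsIntTab T) (k : ℕ) :
    rowSum (flipFirst s T) k = rowSum T k + flipShift s T k := by
  unfold rowSum flipShift
  split_ifs with hk
  · have h1 : 1 ∈ Icc 1 k :=
      mem_Icc.2 ⟨le_rfl, Nat.one_le_iff_ne_zero.2 (by rintro rfl; exact hs hk)⟩
    rw [← add_sum_erase _ _ h1, ← add_sum_erase _ _ h1,
      sum_congr rfl fun i hi => by rw [flipFirst_u_of_ne_one s T k (ne_of_mem_erase hi)],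
      flipFirst_u_one, if_pos hk, (hT k 1).1.intPart_one_sub]
    ring
  · refine (sum_congr rfl fun i _ => ?_).trans (add_zero _).symm
    simp [GTpaper.flipFirst, hk]

lemma zwt_flipFirst {s : Finset ℕ} (hs : 0 ∉ s) {T : Tab ℂ} (hT : IsIntTab T) (k : ℕ) :
    zwt k (flipFirst s T) = zwt k T - flipShift s T k - flipShift s T (k - 1) := by
  simp only [zwt, rowSum_flipFirst hs hT, flipFirst_p]
  ring

lemma relWtSum_flipFirst {s : Finset ℕ} (hs : 0 ∉ s) (T₀ : Tab ℂ) {T : Tab ℂ}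
    (hT : IsIntTab T) (j : ℕ) :
    relWtSum T₀ (flipFirst s T) j =
      relWtSum T₀ T j - flipShift s T j - 2 * ∑ k ∈ Icc 1 (j - 1), flipShift s T k := by
  have h := sum_Icc_add_pred (flipShift s T) (if_neg hs) j
  simp only [nsmul_eq_mul, Nat.cast_ofNat] at h
  rw [sub_sub, ← h, relWtSum, relWtSum, ← sum_sub_distrib]
  exact sum_congr rfl fun k _ => by rw [zwt_flipFirst hs hT]; ring

end Flips

section ParityClasses

variable {n : ℕ} {lam : Fin n → ℂ} {T₀ T : Tab ℂ}

def parityClass (n : ℕ) (lam : Fin n → ℂ) (T₀ : Tab ℂ) : Set (Tab ℂ) :=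
  {T | T ∈ DSt n lam ∧ ∀ k, 1 ≤ k → k ≤ n → 2 ∣ zwt k T - zwt k T₀}

/-- Flipping row `j` changes the parities of `ω_j` and `ω_{j+1}`, so the rows to flip to move `T`
into the parity class of `T₀` are those where the partial sums of `ω(T) - ω(T₀)` are odd. -/
def flipSet (n : ℕ) (T₀ T : Tab ℂ) : Finset ℕ :=
  (Ico 1 n).filter fun j => relWtSum T₀ T j % 2 = 1

lemma flipSet_subset : flipSet n T₀ T ⊆ Ico 1 n := filter_subset _ _

lemma zero_notMem_of_subset_Ico {s : Finset ℕ} (hs : s ⊆ Ico 1 n) : 0 ∉ s :=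
  fun h => by simpa using hs h

lemma flipShift_flipSet_emod_two (hT₀ : T₀ ∈ DSt n lam) (hT : T ∈ DSt n lam) {j : ℕ}
    (hj : j ≤ n) : flipShift (flipSet n T₀ T) T j % 2 = relWtSum T₀ T j % 2 := by
  rw [flipShift_emod_two]
  by_cases hj' : j ∈ Ico 1 n
  · simp only [flipSet, mem_filter, hj', true_and]
    split_ifs <;> omega
  · rw [if_neg fun h => hj' (flipSet_subset h)]
    rcases Nat.eq_zero_or_pos j with rfl | hpos
    · rfl
    · obtain rfl : j = n := by simp only [mem_Ico] at hj'; omega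
      have := DSt_two_dvd_relWtSum hT₀ hT
      omega

lemma flipFirst_flipSet_mem_parityClass (hT₀ : T₀ ∈ DSt n lam) (hT : T ∈ DSt n lam)
    (hTint : IsIntTab T) : flipFirst (flipSet n T₀ T) T ∈ parityClass n lam T₀ := by
  refine ⟨flipFirst_mem_DSt flipSet_subset hT, fun k hk hkn => ?_⟩
  rw [zwt_flipFirst (zero_notMem_of_subset_Ico flipSet_subset) hTint]
  have hk' := flipShift_flipSet_emod_two hT₀ hT hkn
  have hk'' := flipShift_flipSet_emod_two hT₀ hT (j := k - 1) (by omega)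
  have := relWtSum_of_one_le T₀ T hk
  omega

lemma two_dvd_relWtSum_of_mem_parityClass (hT : T ∈ parityClass n lam T₀) {j : ℕ} (hj : j ≤ n) :
    2 ∣ relWtSum T₀ T j :=
  dvd_sum fun k hk => hT.2 k (mem_Icc.1 hk).1 ((mem_Icc.1 hk).2.trans hj)

lemma flipSet_flipFirst {s : Finset ℕ} (hs : s ⊆ Ico 1 n) (hT : T ∈ parityClass n lam T₀)
    (hTint : IsIntTab T) : flipSet n T₀ (flipFirst s T) = s := by
  ext j
  simp only [flipSet, mem_filter, relWtSum_flipFirst (zero_notMem_of_subset_Ico hs) T₀ hTint]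
  by_cases hj : j ∈ Ico 1 n
  · have heven := two_dvd_relWtSum_of_mem_parityClass hT (mem_Ico.1 hj).2.le
    have hshift := flipShift_emod_two s T j
    split_ifs at hshift with hjs <;> simp only [hj, hjs, true_and, iff_true, iff_false] <;> omega
  · simp only [hj, false_and, false_iff]
    exact fun hjs => hj (hs hjs)

def flipEquiv (hlam : ∀ i, IsHalfInt (lam i)) (hT₀ : T₀ ∈ DSt n lam) :
    DSt n lam ≃ (Ico 1 n).powerset × parityClass n lam T₀ where
  toFun T := (⟨flipSet n T₀ T, mem_powerset.2 flipSet_subset⟩,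
    ⟨_, flipFirst_flipSet_mem_parityClass hT₀ T.2 (DSt_isIntTab hlam T.2)⟩)
  invFun x := ⟨flipFirst x.1 x.2, flipFirst_mem_DSt (mem_powerset.1 x.1.2) x.2.2.1⟩
  left_inv T := Subtype.ext (flipFirst_flipFirst _ _)
  right_inv := by
    rintro ⟨⟨s, hs⟩, ⟨T, hT⟩⟩
    have hflip := flipSet_flipFirst (mem_powerset.1 hs) hT (DSt_isIntTab hlam hT.1)
    ext1
    · exact Subtype.ext hflip
    · exact Subtype.ext (by simp only [hflip, flipFirst_flipFirst])

lemma ncard_DSt (hlam : ∀ i, IsHalfInt (lam i)) (hT₀ : T₀ ∈ DSt n lam) :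
    (DSt n lam).ncard = 2 ^ (n - 1) * (parityClass n lam T₀).ncard := by
  rw [← Nat.card_coe_set_eq, ← Nat.card_coe_set_eq, Nat.card_congr (flipEquiv hlam hT₀),
    Nat.card_prod, Nat.card_eq_fintype_card, Fintype.card_coe, card_powerset, Nat.card_Ico]

end ParityClasses

section WeightFiber

def setFirstColumn (T : Tab ℂ) (c : ℕ → ℂ) : Tab ℂ :=
  ⟨T.u, fun k i => if i = 1 then c k else T.p k i⟩

lemma CtoD_setFirstColumn (T : Tab ℂ) (c : ℕ → ℂ) : CtoD (setFirstColumn T c) = CtoD T := by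
  ext k i
  · rfl
  · simp only [CtoD, setFirstColumn]
    split_ifs <;> rfl

lemma setFirstColumn_CtoD (W : Tab ℂ) : setFirstColumn (CtoD W) (fun k => W.p k 1) = W := by
  ext k i
  · rfl
  · simp only [CtoD, setFirstColumn]
    split_ifs with hi <;> simp [hi]

lemma CtoD_eq_self {n : ℕ} {T : Tab ℂ} (hT : DNorm n T) : CtoD T = T := by
  ext k i
  · rfl
  · simp only [CtoD]
    split_ifs with hi
    · exact (hT.2 k i (by omega)).symm
    · rfl

lemma wt_eq_two_mul_add_wt_CtoD (W : Tab ℂ) {k : ℕ} (hk : 1 ≤ k) :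
    wt k W = 2 * W.p k 1 + wt k (CtoD W) := by
  have h1 : 1 ∈ Icc 1 k := mem_Icc.2 ⟨le_rfl, hk⟩
  have hp : ∑ i ∈ (Icc 1 k).erase 1, (CtoD W).p k i = ∑ i ∈ (Icc 1 k).erase 1, W.p k i :=
    sum_congr rfl fun i hi => if_neg (ne_of_mem_erase hi)
  rw [wt, wt, ← add_sum_erase _ _ h1, ← add_sum_erase _ (fun i => (CtoD W).p k i) h1, hp]
  simp only [CtoD, if_true]
  ring

lemma cwtv_eq_cwtv_iff {n : ℕ} {W W' : Tab ℂ} :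
    cwtv n W = cwtv n W' ↔ ∀ k, 1 ≤ k → k ≤ n → wt k W = wt k W' := by
  refine ⟨fun h k hk hkn => ?_, fun h => funext fun k => h _ (by omega) k.2⟩
  simpa [cwtv, Nat.sub_add_cancel hk] using congrFun h ⟨k - 1, by omega⟩

variable {n : ℕ} {mu lam : Fin n → ℂ} {W₀ : Tab ℂ}

lemma exists_p_one_eq_of_mem_TabB {W : Tab ℂ} (hW : W ∈ TabB n mu lam) {k : ℕ} (hk : 1 ≤ k)
    (hkn : k ≤ n) : ∃ m : ℤ, W.p k 1 = mu ⟨k - 1, by omega⟩ + m := by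
  obtain ⟨m, hm⟩ := hW.2.1 ⟨k - 1, by omega⟩
  simp only [Nat.sub_add_cancel hk] at hm
  exact ⟨m, by rw [← hm]; ring⟩

lemma mapsTo_CtoD_weightFiber (hlam : ∀ i, IsHalfInt (lam i)) (hW₀ : W₀ ∈ TabB n mu lam) :
    Set.MapsTo CtoD {W | W ∈ TabB n mu lam ∧ cwtv n W = cwtv n W₀}
      (parityClass n lam (CtoD W₀)) := by
  rintro W ⟨hW, hwt⟩
  refine ⟨hW.2.2, fun k hk hkn => ⟨intPart (W₀.p k 1 - W.p k 1), ?_⟩⟩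
  have h := cwtv_eq_cwtv_iff.1 hwt k hk hkn
  rw [wt_eq_two_mul_add_wt_CtoD W hk, wt_eq_two_mul_add_wt_CtoD W₀ hk,
    wt_eq_zwt (DSt_isIntTab hlam hW.2.2), wt_eq_zwt (DSt_isIntTab hlam hW₀.2.2)] at h
  obtain ⟨a, ha⟩ := exists_p_one_eq_of_mem_TabB hW hk hkn
  obtain ⟨b, hb⟩ := exists_p_one_eq_of_mem_TabB hW₀ hk hkn
  have hint : IsInt (W₀.p k 1 - W.p k 1) := ⟨b - a, by rw [ha, hb]; push_cast; ring⟩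
  have : ((zwt k (CtoD W) - zwt k (CtoD W₀) : ℤ) : ℂ) =
      ((2 * intPart (W₀.p k 1 - W.p k 1) : ℤ) : ℂ) := by
    push_cast
    rw [hint.intCast_intPart]
    linear_combination h
  exact_mod_cast this

lemma injOn_CtoD_weightFiber :
    Set.InjOn CtoD {W | W ∈ TabB n mu lam ∧ cwtv n W = cwtv n W₀} := by
  rintro W ⟨hW, hwt⟩ W' ⟨hW', hwt'⟩ h
  rw [← setFirstColumn_CtoD W, ← setFirstColumn_CtoD W', h]
  congr 1
  funext k
  by_cases hk : 1 ≤ k ∧ k ≤ n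
  · have e := (cwtv_eq_cwtv_iff.1 hwt k hk.1 hk.2).trans (cwtv_eq_cwtv_iff.1 hwt' k hk.1 hk.2).symm
    rw [wt_eq_two_mul_add_wt_CtoD W hk.1, wt_eq_two_mul_add_wt_CtoD W' hk.1, h] at e
    linear_combination e / 2
  · rw [hW.1.2 k 1 (by omega), hW'.1.2 k 1 (by omega)]

/-- The first column is recovered from the weight: `ℓ'_{k1} = (γ_k - ω_k(T)) / 2`. -/
lemma surjOn_CtoD_weightFiber (hlam : ∀ i, IsHalfInt (lam i)) (hW₀ : W₀ ∈ TabB n mu lam) :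
    Set.SurjOn CtoD {W | W ∈ TabB n mu lam ∧ cwtv n W = cwtv n W₀}
      (parityClass n lam (CtoD W₀)) := by
  rintro T ⟨hT, hpar⟩
  let c : ℕ → ℂ := fun k =>
    if 1 ≤ k ∧ k ≤ n then W₀.p k 1 - (wt k T - wt k (CtoD W₀)) / 2 else 0
  have hc : ∀ k, 1 ≤ k → k ≤ n →
      (setFirstColumn T c).p k 1 = W₀.p k 1 - (wt k T - wt k (CtoD W₀)) / 2 := by
    intro k hk hkn
    simp [setFirstColumn, c, hk, hkn]
  have hCtoD : CtoD (setFirstColumn T c) = T := by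
    rw [CtoD_setFirstColumn, CtoD_eq_self hT.1]
  refine ⟨setFirstColumn T c, ⟨⟨⟨hT.1.1, fun k i hki => ?_⟩, fun k => ?_, by rw [hCtoD]; exact hT⟩,
    ?_⟩, hCtoD⟩
  · simp only [setFirstColumn, c]
    split_ifs with hi h
    · omega
    · rfl
    · exact hT.1.2 k i (by omega)
  · obtain ⟨m, hm⟩ := hpar _ (by omega) k.2
    obtain ⟨b, hb⟩ := exists_p_one_eq_of_mem_TabB hW₀ (k := k + 1) (by omega) k.2
    have hm' : ((zwt (k + 1) T : ℤ) : ℂ) - zwt (k + 1) (CtoD W₀) = 2 * m := by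
      exact_mod_cast hm
    refine ⟨b - m, ?_⟩
    rw [hc _ (by omega) k.2, wt_eq_zwt (DSt_isIntTab hlam hT),
      wt_eq_zwt (DSt_isIntTab hlam hW₀.2.2), hb]
    simp only [Nat.add_sub_cancel, Fin.eta]
    push_cast
    linear_combination -hm' / 2
  · refine cwtv_eq_cwtv_iff.2 fun k hk hkn => ?_
    rw [wt_eq_two_mul_add_wt_CtoD _ hk, wt_eq_two_mul_add_wt_CtoD W₀ hk, hCtoD, hc k hk hkn]
    ring

lemma bijOn_CtoD_weightFiber (hlam : ∀ i, IsHalfInt (lam i)) (hW₀ : W₀ ∈ TabB n mu lam) :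
    Set.BijOn CtoD {W | W ∈ TabB n mu lam ∧ cwtv n W = cwtv n W₀}
      (parityClass n lam (CtoD W₀)) :=
  ⟨mapsTo_CtoD_weightFiber hlam hW₀, injOn_CtoD_weightFiber,
    surjOn_CtoD_weightFiber hlam hW₀⟩

end WeightFiber

theorem weight_multiplicity_general (n : ℕ) (mu lam : Fin n → ℂ)
    (hlam : ∀ i, IsHalfInt (lam i))
    (W0 : Tab ℂ) (hW0 : W0 ∈ TabB n mu lam) :
    {W | W ∈ TabB n mu lam ∧ cwtv n W = cwtv n W0}.Finite ∧
      2 ^ (n - 1) * {W | W ∈ TabB n mu lam ∧ cwtv n W = cwtv n W0}.ncard =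
        (DSt n lam).ncard := by
  have hbij := bijOn_CtoD_weightFiber hlam hW0
  have hfin : (parityClass n lam (CtoD W0)).Finite :=
    (DSt_finite hlam).subset fun _ hT => hT.1
  refine ⟨.of_finite_image (hbij.image_eq ▸ hfin) hbij.injOn, ?_⟩
  rw [ncard_DSt hlam hW0.2.2, ← hbij.image_eq, hbij.injOn.ncard_image]

/-- for every `C`-weight `γ` of `𝔅(μ,λ)`, the fiber of weight `γ` is finite
and `2^{n-1}` times its cardinality equals the cardinality of `D_st^λ`. -/
theorem weight_multiplicity (n : ℕ) (hn : 2 ≤ n) (mu lam : Fin n → ℂ)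
    (hmu : ∀ i, ¬IsInt (mu i)) (hlam : ∀ i, IsHalfInt (lam i)) (hdom : SODominant lam)
    (W0 : Tab ℂ) (hW0 : W0 ∈ TabB n mu lam) :
    {W | W ∈ TabB n mu lam ∧ cwtv n W = cwtv n W0}.Finite ∧
      2 ^ (n - 1) * {W | W ∈ TabB n mu lam ∧ cwtv n W = cwtv n W0}.ncard =
        (DSt n lam).ncard :=
  weight_multiplicity_general n mu lam hlam W0 hW0

end GTpaper
end
end

section
/- Let μ ∈ (ℂ∖ℤ)^n, let λ ∈ (1/2+ℤ)^n be a dominant so(2n)-weight, fix k ∈ [n], and let T(L) ∈ B(μ,λ) satisfy ℓ'_{k1} = 1/2, ℓ'_{kk} = ℓ_{kk}, and ℓ_{ki} = ℓ'_{ki} = ℓ_{k−1,i} for all 2 ≤ i ≤ k−1. Then, in each case under the assumption that all denominators occurring in the expression are nonzero: (i) B_{ki}(L) = 0 for every i ∈ [k]; (ii) B_{kr}(L−δ^{(k−1,s)}) = 0 for every s ∈ [k−1] and every 2 ≤ r ≤ k−1; (iii) B_{kt}(L+δ^{(ki)'}+δ^{(k−1,j)}) = 0 for all 1 ≤ t ≠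 i ≤ k and every j ∈ [k−1]; (iv) B_{kj}(L+δ^{(kj)'}+δ^{(k−1,j)}) = 0 for every 2 ≤ j ≤ k−1; (v) D_{kijm}(L) = 0 whenever i ∈ [k], j, m ∈ [k−1], j ≠ 1 and i ≠ j. -/
open scoped BigOperators Classical

noncomputable section

namespace GTpaper

attribute [local instance 100] LieRing.ofAssociativeRing

end GTpaper

/-!
Each coefficient in question carries a product over the entries of the tableau, and the
hypotheses make one of its factors vanish: `2ℓ'_{k1} - 1 = 0`, `ℓ_{kt} - ℓ'_{kt} = 0` for
`2 ≤ t ≤ k`, `ℓ_{k-1,j} - ℓ'_{kj} = 0` after raising both entries by one, and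
`ℓ_{k-1,j}² - ℓ'_{kj}² = 0` in `D_{kijm}` for `i ≠ j`. The integer shifts in (ii) and (iii)
leave the relevant entries of row `k` untouched.
-/

namespace GTpaper

section Entries

variable {R : Type*} [Ring R]

@[simp] lemma Tab.addZ_u (L : Tab R) (Z : Tab ℤ) (k i : ℕ) :
    (L.addZ Z).u k i = L.u k i + (Z.u k i : R) := rfl

@[simp] lemma Tab.addZ_p (L : Tab R) (Z : Tab ℤ) (k i : ℕ) :
    (L.addZ Z).p k i = L.p k i + (Z.p k i : R) := rfl

end Entries

@[simp] lemma Tab.add_u (a b : Tab ℤ) (k i : ℕ) : (a + b).u k i = a.u k i + b.u k i := rfl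

@[simp] lemma Tab.add_p (a b : Tab ℤ) (k i : ℕ) : (a + b).p k i = a.p k i + b.p k i := rfl

@[simp] lemma Tab.neg_u (a : Tab ℤ) (k i : ℕ) : (-a).u k i = -a.u k i := rfl

@[simp] lemma Tab.neg_p (a : Tab ℤ) (k i : ℕ) : (-a).p k i = -a.p k i := rfl

@[simp] lemma deltaU_u (k i a b : ℕ) :
    (deltaU k i).u a b = if a = k ∧ b = i then 1 else 0 := rfl

@[simp] lemma deltaU_p (k i a b : ℕ) : (deltaU k i).p a b = 0 := rfl

@[simp] lemma deltaP_u (k i a b : ℕ) : (deltaP k i).u a b = 0 := rfl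

@[simp] lemma deltaP_p (k i a b : ℕ) :
    (deltaP k i).p a b = if a = k ∧ b = i then 1 else 0 := rfl

section Vanishing

variable {F : Type*} [Field F] {k i j m : ℕ} {M : Tab F}

lemma coB_eq_zero_of_two_mul_p_eq_one (h : 2 * M.p k i = 1) : coB k i M = 0 := by
  rw [coB, h]; ring

lemma coB_eq_zero_of_u_eq_p {a : ℕ} (ha : a ∈ Finset.Icc 1 k) (h : M.u k a = M.p k i) :
    coB k i M = 0 := by
  rw [coB, Finset.prod_eq_zero ha (sub_eq_zero.2 h)]; ring

lemma coB_eq_zero_of_u_pred_eq_p {a : ℕ} (ha : a ∈ Finset.Icc 1 (k - 1))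
    (h : M.u (k - 1) a = M.p k i) : coB k i M = 0 := by
  rw [coB, Finset.prod_eq_zero ha (sub_eq_zero.2 h)]; ring

lemma coD_eq_zero_of_u_pred_eq_p {a : ℕ} (ha : a ∈ Finset.Icc 1 k) (hai : a ≠ i)
    (h : M.u (k - 1) j = M.p k a) : coD k i j m M = 0 := by
  rw [coD, Finset.prod_eq_zero (Finset.mem_erase.2 ⟨hai, ha⟩) (by rw [h]; ring)]; ring

lemma coB_eq_zero_of_entries_eq {L : Tab F} (hL1 : 2 * L.p k 1 = 1)
    (hdiag : ∀ t, 2 ≤ t → t ≤ k → L.u k t = L.p k t) {t : ℕ} (ht1 : 1 ≤ t) (htk : t ≤ k)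
    (hu : M.u k t = L.u k t) (hp : M.p k t = L.p k t) : coB k t M = 0 := by
  obtain rfl | ht2 := ht1.eq_or_lt
  · exact coB_eq_zero_of_two_mul_p_eq_one (hp ▸ hL1)
  · exact coB_eq_zero_of_u_eq_p (Finset.mem_Icc.2 ⟨ht1, htk⟩) (by rw [hu, hp, hdiag t ht2 htk])

end Vanishing

theorem some_identities_general
    (k : ℕ)
    (L : Tab ℂ)
    (h1 : L.p k 1 = 1 / 2) (h2 : L.p k k = L.u k k)
    (h3 : ∀ i, 2 ≤ i → i ≤ k - 1 → L.u k i = L.p k i ∧ L.p k i = L.u (k - 1) i) :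
    (∀ i, 1 ≤ i → i ≤ k → coB k i L = 0) ∧
    (∀ s r, 1 ≤ s → s ≤ k - 1 → 2 ≤ r → r ≤ k - 1 →
      coB k r (L.addZ (-deltaU (k - 1) s)) = 0) ∧
    (∀ t i j, 1 ≤ t → t ≤ k → 1 ≤ i → i ≤ k → t ≠ i → 1 ≤ j → j ≤ k - 1 →
      coB k t (L.addZ (deltaP k i + deltaU (k - 1) j)) = 0) ∧
    (∀ j, 2 ≤ j → j ≤ k - 1 → coB k j (L.addZ (deltaP k j + deltaU (k - 1) j)) = 0) ∧
    (∀ i j m, 1 ≤ i → i ≤ k → 1 ≤ j → j ≤ k - 1 → 1 ≤ m → m ≤ k - 1 → j ≠ 1 → i ≠ j →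
      coD k i j m L = 0) := by
  have hL1 : 2 * L.p k 1 = 1 := by rw [h1]; norm_num
  have hdiag : ∀ t, 2 ≤ t → t ≤ k → L.u k t = L.p k t := fun t ht2 htk =>
    if htk' : t = k then htk' ▸ h2.symm else (h3 t ht2 (by omega)).1
  refine ⟨fun i hi1 hik => coB_eq_zero_of_entries_eq hL1 hdiag hi1 hik rfl rfl, ?_, ?_, ?_, ?_⟩
  · intro s r _ _ hr2 hrk
    exact coB_eq_zero_of_entries_eq hL1 hdiag (by omega) (by omega) (by simp; omega) (by simp)
  · intro t i j ht1 htk _ _ hti _ _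
    exact coB_eq_zero_of_entries_eq hL1 hdiag ht1 htk (by simp; omega) (by simp [hti])
  · intro j hj2 hjk
    refine coB_eq_zero_of_u_pred_eq_p (Finset.mem_Icc.2 ⟨by omega, hjk⟩) ?_
    simp [(h3 j hj2 hjk).2]
  · intro i j m _ _ hj1 hjk _ _ _ hij
    exact coD_eq_zero_of_u_pred_eq_p (Finset.mem_Icc.2 ⟨hj1, by omega⟩) (Ne.symm hij)
      (h3 j (by omega) hjk).2.symm

/-- Lemma "some identities": vanishing of the coefficients `B` and `D` on
tableaux `T(L) ∈ 𝔅(μ,λ)` with `ℓ'_{k1} = 1/2`, `ℓ'_{kk} = ℓ_{kk}` and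
`ℓ_{ki} = ℓ'_{ki} = ℓ_{k-1,i}` for `2 ≤ i ≤ k-1`. -/
theorem some_identities (n : ℕ) (hn : 2 ≤ n) (mu lam : Fin n → ℂ)
    (hmu : ∀ i, ¬IsInt (mu i)) (hlam : ∀ i, IsHalfInt (lam i)) (hdom : SODominant lam)
    (k : ℕ) (hk1 : 1 ≤ k) (hk : k ≤ n)
    (L : Tab ℂ) (hL : L ∈ TabB n mu lam)
    (h1 : L.p k 1 = 1 / 2) (h2 : L.p k k = L.u k k)
    (h3 : ∀ i, 2 ≤ i → i ≤ k - 1 → L.u k i = L.p k i ∧ L.p k i = L.u (k - 1) i) :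
    (∀ i, 1 ≤ i → i ≤ k → coB k i L = 0) ∧
    (∀ s r, 1 ≤ s → s ≤ k - 1 → 2 ≤ r → r ≤ k - 1 →
      coB k r (L.addZ (-deltaU (k - 1) s)) = 0) ∧
    (∀ t i j, 1 ≤ t → t ≤ k → 1 ≤ i → i ≤ k → t ≠ i → 1 ≤ j → j ≤ k - 1 →
      coB k t (L.addZ (deltaP k i + deltaU (k - 1) j)) = 0) ∧
    (∀ j, 2 ≤ j → j ≤ k - 1 → coB k j (L.addZ (deltaP k j + deltaU (k - 1) j)) = 0) ∧
    (∀ i j m, 1 ≤ i → i ≤ k → 1 ≤ j → j ≤ k - 1 → 1 ≤ m → m ≤ k - 1 → j ≠ 1 → i ≠ j →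
      coD k i j m L = 0) :=
  some_identities_general k L h1 h2 h3

end GTpaper
end
end

section
/- Let μ ∈ (ℂ∖ℤ)^n with μ_k ∈ 1/2+ℤ for a fixed k ∈ [n], and let λ ∈ (1/2+ℤ)^n be a dominant so(2n)-weight. For type-D tableaux T(R), T(W) define S_j(R−W) = ∑_{i=1}^{j}(r_{ji} − w_{ji}) and S'_j(R−W) = ∑_{i=2}^{j}(r'_{ji} − w'_{ji}) (with S_0 = 0), and set t_k(λ) = max over all pairs T(R), T(W) ∈ D_st^λ of ⌊S'_k(R−W) − (1/2)S_k(R−W) − (1/2)S_{k−1}(R−W)⌋. Set B_k^+(μ,λ) = {T(W) ∈ B(μ,λ) : w'_{k1} − 1/2 ∈ ℤ≥0}. If T(W) ∈ B_k^+(μ,λ) satisfies w'_{k1} − 1/2 − t_k(λ) ∈ ℤ≥0, then every T(U) ∈ B(μ,λ) with ω(T(U)) = ω(T(W)) belongs to B_k^+(μ,λ). -/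
open scoped BigOperators Classical

noncomputable section

namespace GTpaper

attribute [local instance 100] LieRing.ofAssociativeRing

end GTpaper

namespace GTpaper

/-- `t_k(λ)`: the maximum over pairs `T(R), T(W) ∈ D_st^λ` of
`⌊S'_k(R-W) - (1/2)S_k(R-W) - (1/2)S_{k-1}(R-W)⌋` (a `1`-based row index `k`). -/
def tkval (n : ℕ) (lam : Fin n → ℂ) (k : ℕ) : ℤ :=
  sSup {t : ℤ | ∃ R ∈ DSt n lam, ∃ W ∈ DSt n lam,
    t = ⌊((∑ i ∈ Finset.Icc 2 k, (R.p k i - W.p k i)) -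
          (1 / 2) * (∑ i ∈ Finset.Icc 1 k, (R.u k i - W.u k i)) -
          (1 / 2) * (∑ i ∈ Finset.Icc 1 (k - 1), (R.u (k - 1) i - W.u (k - 1) i))).re⌋}

/-!
Only the `k`-th component of the weight matters. Since `u'_{k1} - w'_{k1} ∈ ℤ` and the entries
`u'_{k1}, w'_{k1}` enter `ω_k` with coefficient `2`, the equality `ω_k(U) = ω_k(W)` says that
`w'_{k1} - u'_{k1} = S'_k - ½ S_k - ½ S_{k-1}` evaluated on the `D`-parts of `U - W`; this integer is
at most `t_k(λ)`, so `u'_{k1} - 1/2 ≥ w'_{k1} - 1/2 - t_k(λ) ≥ 0`. The maximum defining `t_k(λ)`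
exists because interlacing bounds every entry of a `D`-standard tableau by its top row.
-/

lemma IntGE.re_le {a b : ℂ} (h : IntGE a b) : b.re ≤ a.re := by
  obtain ⟨m, rfl⟩ := h
  simp

lemma IntGT.re_add_one_le {a b : ℂ} (h : IntGT a b) : b.re + 1 ≤ a.re := by
  obtain ⟨m, rfl⟩ := h
  simp

lemma intGE_of_eq_add_int {a b : ℂ} {z : ℤ} (hz : 0 ≤ z) (h : a = b + z) : IntGE a b := by
  obtain ⟨m, rfl⟩ := Int.eq_ofNat_of_zero_le hz
  exact ⟨m, by simpa using h⟩

lemma abs_re_sum_sub_le {ι : Type*} (s : Finset ι) {f g : ι → ℂ} {M : ℝ}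
    (hf : ∀ i ∈ s, |(f i).re| ≤ M) (hg : ∀ i ∈ s, |(g i).re| ≤ M) :
    |(∑ i ∈ s, (f i - g i)).re| ≤ s.card * (2 * M) := by
  rw [Complex.re_sum, ← nsmul_eq_mul]
  refine (Finset.abs_sum_le_sum_abs _ _).trans (Finset.sum_le_card_nsmul _ _ _ fun i hi => ?_)
  rw [Complex.sub_re, two_mul]
  exact (abs_sub _ _).trans (add_le_add (hf i hi) (hg i hi))

section EntryBounds

variable {n : ℕ} {T : Tab ℂ} {M : ℝ}

lemma IsDStandard.abs_re_p_le (hT : IsDStandard n T) {k : ℕ} (hk : k ≤ n)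
    (hu : ∀ i, 1 ≤ i → i ≤ k → |(T.u k i).re| ≤ M) {i : ℕ} (hi : 2 ≤ i) (hik : i ≤ k) :
    |(T.p k i).re| ≤ M := by
  obtain ⟨-, hle, hlt, -⟩ := hT k (hi.trans hik) hk
  have lower := (hle i hi hik).re_le
  have upper := (hlt (i - 1) (by omega) (by omega)).re_add_one_le
  rw [Nat.sub_add_cancel (by omega : 1 ≤ i)] at upper
  have bound_i := abs_le.1 (hu i (by omega) hik)
  have bound_pred := abs_le.1 (hu (i - 1) (by omega) (by omega))
  exact abs_le.2 ⟨by linarith, by linarith⟩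

lemma IsDStandard.abs_re_u_le_of_succ (hT : IsDStandard n T) {k : ℕ} (hk : k + 1 ≤ n)
    (hp : ∀ i, 2 ≤ i → i ≤ k + 1 → |(T.p (k + 1) i).re| ≤ M) {i : ℕ} (hi : 1 ≤ i)
    (hik : i ≤ k) : |(T.u k i).re| ≤ M := by
  obtain ⟨-, -, -, hfirst, hle, hlt⟩ := hT (k + 1) (by omega) hk
  simp only [Nat.add_sub_cancel] at hfirst hle hlt
  have lower := (hlt i hi hik).re_add_one_le
  have bound_succ := (abs_le.1 (hp (i + 1) (by omega) (by omega))).1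
  have upper : (T.u k i).re ≤ M := by
    rcases eq_or_lt_of_le hi with rfl | hi
    · have h := hfirst.re_le
      have bound_two := (abs_le.1 (hp 2 le_rfl (by omega))).1
      rw [Complex.neg_re] at h
      linarith
    · have h := (hle i hi hik).re_le
      have bound_i := (abs_le.1 (hp i hi (by omega))).2
      linarith
  exact abs_le.2 ⟨by linarith, upper⟩

lemma abs_re_u_le_of_mem_DSt {lam : Fin n → ℂ} (hT : T ∈ DSt n lam)
    (hM : ∀ i : Fin n, |(lam i - (((i : ℕ) : ℂ) + 1) + 3 / 2).re| ≤ M) {k : ℕ} (hk : k ≤ n) :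
    ∀ i, 1 ≤ i → i ≤ k → |(T.u k i).re| ≤ M := by
  obtain ⟨-, hstd, htop⟩ := hT
  induction hk using Nat.decreasingInduction with
  | self =>
    intro i hi hin
    obtain ⟨j, rfl⟩ : ∃ j : Fin n, (j : ℕ) + 1 = i := ⟨⟨i - 1, by omega⟩, by simp; omega⟩
    rw [htop j]
    exact hM j
  | of_succ k hk ih =>
    exact fun i hi hik =>
      hstd.abs_re_u_le_of_succ hk (fun j hj hjk => hstd.abs_re_p_le hk ih hj hjk) hi hik

end EntryBounds

-- `S'_k(R - W) - ½ S_k(R - W) - ½ S_{k-1}(R - W)`, the quantity maximized in `t_k(λ)`.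
def tkDiff (k : ℕ) (R W : Tab ℂ) : ℂ :=
  (∑ i ∈ Finset.Icc 2 k, (R.p k i - W.p k i)) -
    (1 / 2) * (∑ i ∈ Finset.Icc 1 k, (R.u k i - W.u k i)) -
    (1 / 2) * (∑ i ∈ Finset.Icc 1 (k - 1), (R.u (k - 1) i - W.u (k - 1) i))

lemma bddAbove_floor_tkDiff {n : ℕ} (lam : Fin n → ℂ) {k : ℕ} (hk : k ≤ n) :
    BddAbove {t : ℤ | ∃ R ∈ DSt n lam, ∃ W ∈ DSt n lam, t = ⌊(tkDiff k R W).re⌋} := by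
  obtain ⟨M, hM⟩ :=
    Finite.bddAbove_range fun i : Fin n => |(lam i - (((i : ℕ) : ℂ) + 1) + 3 / 2).re|
  replace hM : ∀ i : Fin n, |(lam i - (((i : ℕ) : ℂ) + 1) + 3 / 2).re| ≤ M :=
    fun i => hM ⟨i, rfl⟩
  refine ⟨⌊2 * M * ((Finset.Icc 2 k).card + (Finset.Icc 1 k).card / 2 +
    (Finset.Icc 1 (k - 1)).card / 2 : ℝ)⌋, ?_⟩
  rintro t ⟨R, hR, W, hW, rfl⟩
  refine Int.floor_le_floor ?_
  have hu (T : Tab ℂ) (hT : T ∈ DSt n lam) (j : ℕ) (hj : j ≤ n) :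
      ∀ i ∈ Finset.Icc 1 j, |(T.u j i).re| ≤ M := fun i hi =>
    abs_re_u_le_of_mem_DSt hT hM hj i (Finset.mem_Icc.1 hi).1 (Finset.mem_Icc.1 hi).2
  have hp (T : Tab ℂ) (hT : T ∈ DSt n lam) : ∀ i ∈ Finset.Icc 2 k, |(T.p k i).re| ≤ M :=
    fun i hi => hT.2.1.abs_re_p_le hk (abs_re_u_le_of_mem_DSt hT hM hk)
      (Finset.mem_Icc.1 hi).1 (Finset.mem_Icc.1 hi).2
  have b₁ := abs_le.1 (abs_re_sum_sub_le _ (hp R hR) (hp W hW))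
  have b₂ := abs_le.1 (abs_re_sum_sub_le _ (hu R hR k hk) (hu W hW k hk))
  have b₃ := abs_le.1
    (abs_re_sum_sub_le _ (hu R hR (k - 1) (by omega)) (hu W hW (k - 1) (by omega)))
  have half_re (z : ℂ) : ((1 / 2) * z).re = z.re / 2 := by simp [Complex.mul_re]; ring
  simp only [tkDiff, Complex.sub_re, half_re]
  linarith [b₁.2, b₂.1, b₃.1]

lemma floor_tkDiff_le_tkval {n : ℕ} {lam : Fin n → ℂ} {k : ℕ} (hk : k ≤ n) {R W : Tab ℂ}
    (hR : R ∈ DSt n lam) (hW : W ∈ DSt n lam) : ⌊(tkDiff k R W).re⌋ ≤ tkval n lam k :=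
  le_csSup (bddAbove_floor_tkDiff lam hk) ⟨R, hR, W, hW, rfl⟩

lemma tkDiff_CtoD_of_wt_eq {K : ℕ} (hK : 1 ≤ K) {U W : Tab ℂ} (h : wt K U = wt K W) :
    tkDiff K (CtoD U) (CtoD W) = W.p K 1 - U.p K 1 := by
  have split (T : Tab ℂ) :
      ∑ i ∈ Finset.Icc 1 K, T.p K i = T.p K 1 + ∑ i ∈ Finset.Icc 2 K, (CtoD T).p K i := by
    rw [← Finset.add_sum_Ioc_eq_sum_Icc hK, ← Finset.Icc_add_one_left_eq_Ioc]
    congr 1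
    refine Finset.sum_congr rfl fun i hi => ?_
    simp [CtoD, show i ≠ 1 by grind]
  have hu (T : Tab ℂ) : (CtoD T).u = T.u := rfl
  simp only [wt, split] at h
  simp only [tkDiff, hu, Finset.sum_sub_distrib]
  linear_combination (1 / 2 : ℂ) * h

theorem essential_support_general (n : ℕ) (mu lam : Fin n → ℂ)
    (k : Fin n)
    (W : Tab ℂ) (hW : W ∈ BkPlus n mu lam ((k : ℕ) + 1))
    (ht : IntGE (W.p ((k : ℕ) + 1) 1) (1 / 2 + (tkval n lam ((k : ℕ) + 1) : ℂ))) :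
    ∀ U ∈ TabB n mu lam, (∀ j : Fin n, wt ((j : ℕ) + 1) U = wt ((j : ℕ) + 1) W) →
      U ∈ BkPlus n mu lam ((k : ℕ) + 1) := by
  intro U hU hwt
  refine ⟨hU, ?_⟩
  obtain ⟨a, ha⟩ := hU.2.1 k
  obtain ⟨b, hb⟩ := hW.1.2.1 k
  have hdiff : tkDiff ((k : ℕ) + 1) (CtoD U) (CtoD W) = ((b - a : ℤ) : ℂ) := by
    rw [tkDiff_CtoD_of_wt_eq (Nat.le_add_left 1 _) (hwt k)]
    push_cast
    linear_combination hb - ha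
  have hle : b - a ≤ tkval n lam ((k : ℕ) + 1) := by
    simpa [hdiff] using floor_tkDiff_le_tkval k.isLt hU.2.2 hW.1.2.2
  obtain ⟨c, hc⟩ := ht
  refine intGE_of_eq_add_int (z := tkval n lam ((k : ℕ) + 1) - (b - a) + c) (by omega) ?_
  push_cast
  linear_combination ha - hb + hc

/-- if `T(W) ∈ 𝔅_k^+(μ,λ)` satisfies `w'_{k1} - 1/2 - t_k(λ) ∈ ℤ≥0`, then
every tableau of `𝔅(μ,λ)` with the same `C`-weight as `T(W)` lies in `𝔅_k^+(μ,λ)`. -/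
theorem essential_support (n : ℕ) (hn : 2 ≤ n) (mu lam : Fin n → ℂ)
    (hmu : ∀ i, ¬IsInt (mu i)) (hlam : ∀ i, IsHalfInt (lam i)) (hdom : SODominant lam)
    (k : Fin n) (hmuk : IsHalfInt (mu k))
    (W : Tab ℂ) (hW : W ∈ BkPlus n mu lam ((k : ℕ) + 1))
    (ht : IntGE (W.p ((k : ℕ) + 1) 1) (1 / 2 + (tkval n lam ((k : ℕ) + 1) : ℂ))) :
    ∀ U ∈ TabB n mu lam, (∀ j : Fin n, wt ((j : ℕ) + 1) U = wt ((j : ℕ) + 1) W) →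
      U ∈ BkPlus n mu lam ((k : ℕ) + 1) :=
  essential_support_general n mu lam k W hW ht

end GTpaper
end
end
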